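/- arXiv:1512.01702 — 3 statements merged into one kernel-verified Lean document; each statement's English description precedes it below -/
import Mathlib

section
/- Let B ⊆ ℤ be a Bohr-zero non-periodic set. Then the set of discriminants over B, D := {x·y − z² | x, y, z ∈ B}, satisfies D = ℤ. -/
open MeasureTheory Filter Topology Polynomial

noncomputable section

instance : Fact ((0:ℝ) < 1) := ⟨zero_lt_one⟩

/-- A non-periodic Bohr set in an abelian group `G`: the preimage of an open
subset of a finite-dimensional torus under a homomorphism with dense image. -/
def IsNonPeriodicBohr {G : Type*} [AddCommGroup G] (B : Set G) : Prop :=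
  ∃ m : ℕ, 1 ≤ m ∧ ∃ (τ : G →+ (Fin m → AddCircle (1 : ℝ)))
    (U : Set (Fin m → AddCircle (1 : ℝ))),
      DenseRange τ ∧ IsOpen U ∧ B = τ ⁻¹' U

/-- A Bohr-zero non-periodic set: additionally the open set contains `0`. -/
def IsBohrZeroNonPeriodic {G : Type*} [AddCommGroup G] (B : Set G) : Prop :=
  ∃ m : ℕ, 1 ≤ m ∧ ∃ (τ : G →+ (Fin m → AddCircle (1 : ℝ)))
    (U : Set (Fin m → AddCircle (1 : ℝ))),
      DenseRange τ ∧ IsOpen U ∧ (0 : Fin m → AddCircle (1 : ℝ)) ∈ U ∧ B = τ ⁻¹' U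

/-!
With `x = t`, `z = t + u`, `y = t + 2u + v` one has `x y - z² = t v - u²`, so it suffices to find
integers `t, u, v` with `t v - u² = D` whose multiples of `α = τ 1` are all close to `0`. Density
of `ℤ α` makes `∑ nᵢ αᵢ` a point of infinite order for every nonzero `n : ℤᵐ`, so by van der
Corput's difference trick every nontrivial character averages to `0` along a quadratic orbit
`s ↦ P(s) α` whose leading coefficients are independent; since the characters span a dense
subspace of `C(𝕋ᵐ, ℂ)`, such an orbit visits every ball. First pick `w` with `(w² + D) α` small
and `v = w² + D ≠ 0`, then `s` with `u α` and `t α` small for `u = v s + w` and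
`t = v s² + 2 w s + 1`: then `t v - u² = v - w² = D`.
-/

open Finset AddCircle
open scoped ComplexConjugate

def cesaroMean (a : ℕ → ℂ) (N : ℕ) : ℂ := (N : ℂ)⁻¹ * ∑ s ∈ range N, a s

theorem norm_cesaroMean (a : ℕ → ℂ) (N : ℕ) :
    ‖cesaroMean a N‖ = ‖∑ s ∈ range N, a s‖ / N := by
  simp [cesaroMean, div_eq_inv_mul]

theorem norm_cesaroMean_le {a : ℕ → ℂ} {C : ℝ} (ha : ∀ s, ‖a s‖ ≤ C) (N : ℕ) :
    ‖cesaroMean a N‖ ≤ C := by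
  rw [norm_cesaroMean]
  rcases N.eq_zero_or_pos with rfl | hN
  · simpa using (norm_nonneg _).trans (ha 0)
  rw [div_le_iff₀ (by exact_mod_cast hN)]
  simpa [mul_comm] using (norm_sum_le _ _).trans (sum_le_sum (s := range N) fun s _ => ha s)

theorem cesaroMean_const_mul (c : ℂ) (a : ℕ → ℂ) (N : ℕ) :
    cesaroMean (fun s => c * a s) N = c * cesaroMean a N := by
  simp only [cesaroMean, ← mul_sum]; ring

theorem cesaroMean_add (a b : ℕ → ℂ) (N : ℕ) :
    cesaroMean (fun s => a s + b s) N = cesaroMean a N + cesaroMean b N := by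
  simp only [cesaroMean, sum_add_distrib, mul_add]

theorem cesaroMean_sub (a b : ℕ → ℂ) (N : ℕ) :
    cesaroMean (fun s => a s - b s) N = cesaroMean a N - cesaroMean b N := by
  simp only [cesaroMean, sum_sub_distrib, mul_sub]

theorem tendsto_cesaroMean_one : Tendsto (cesaroMean fun _ => 1) atTop (𝓝 1) :=
  tendsto_const_nhds.congr' <| (eventually_gt_atTop 0).mono fun N hN => by
    simp [cesaroMean, Nat.cast_ne_zero.mpr hN.ne']

theorem tendsto_cesaroMean_pow {z : ℂ} (hz : ‖z‖ = 1) (h1 : z ≠ 1) :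
    Tendsto (cesaroMean (z ^ ·)) atTop (𝓝 0) := by
  have hbound : ∀ N, ‖∑ s ∈ range N, z ^ s‖ ≤ 2 / ‖z - 1‖ := fun N => by
    rw [geom_sum_eq h1, norm_div]
    gcongr
    calc ‖z ^ N - 1‖ ≤ ‖z ^ N‖ + ‖(1 : ℂ)‖ := norm_sub_le _ _
      _ = 2 := by rw [norm_pow, hz]; norm_num
  refine squeeze_zero_norm (fun N => ?_) (tendsto_const_div_atTop_nhds_zero_nat (2 / ‖z - 1‖))
  rw [norm_cesaroMean]
  gcongr
  exact hbound N

theorem norm_sum_range_shift_sub_le (a : ℕ → ℂ) (ha : ∀ s, ‖a s‖ ≤ 1) (N j : ℕ) :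
    ‖∑ s ∈ range N, a (s + j) - ∑ s ∈ range N, a s‖ ≤ 2 * j := by
  have hshift : ∑ s ∈ range N, a (s + j) - ∑ s ∈ range N, a s
      = ∑ s ∈ range j, a (N + s) - ∑ s ∈ range j, a s := by
    have h1 := sum_range_add a j N
    have h2 := sum_range_add a N j
    simp only [add_comm j N, add_comm j] at h1
    linear_combination h1.symm.trans h2
  have hle : ∀ f : ℕ → ℂ, (∀ s, ‖f s‖ ≤ 1) → ‖∑ s ∈ range j, f s‖ ≤ j := fun f hf =>
    (norm_sum_le _ _).trans (by simpa using sum_le_sum (s := range j) fun s _ => hf s)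
  rw [hshift, two_mul]
  exact (norm_sub_le _ _).trans (add_le_add (hle _ fun s => ha _) (hle _ ha))

theorem sum_norm_sq_sum_shift_le (a : ℕ → ℂ) (H N : ℕ) :
    ∑ s ∈ range N, ‖∑ j ∈ range H, a (s + j)‖ ^ 2 ≤
      ∑ j ∈ range H, ∑ j' ∈ range H, ‖∑ s ∈ range N, a (s + j) * conj (a (s + j'))‖ := by
  have hexpand : ((∑ s ∈ range N, ‖∑ j ∈ range H, a (s + j)‖ ^ 2 : ℝ) : ℂ)
      = ∑ j ∈ range H, ∑ j' ∈ range H, ∑ s ∈ range N, a (s + j) * conj (a (s + j')) := by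
    push_cast
    simp_rw [← Complex.mul_conj', map_sum, sum_mul_sum]
    rw [sum_comm]
    exact sum_congr rfl fun j _ => sum_comm
  calc ∑ s ∈ range N, ‖∑ j ∈ range H, a (s + j)‖ ^ 2
      = ‖((∑ s ∈ range N, ‖∑ j ∈ range H, a (s + j)‖ ^ 2 : ℝ) : ℂ)‖ := by
        rw [Complex.norm_real, Real.norm_of_nonneg (by positivity)]
    _ ≤ _ := by
        rw [hexpand]
        exact (norm_sum_le _ _).trans (sum_le_sum fun j _ => norm_sum_le _ _)

theorem van_der_corput_inequality (a : ℕ → ℂ) (ha : ∀ s, ‖a s‖ ≤ 1) (H N : ℕ) :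
    H * ‖∑ s ∈ range N, a s‖ ≤
      √(N * ∑ j ∈ range H, ∑ j' ∈ range H, ‖∑ s ∈ range N, a (s + j) * conj (a (s + j'))‖)
        + 2 * H ^ 2 := by
  set b : ℕ → ℂ := fun s => ∑ j ∈ range H, a (s + j)
  have hwindow : ‖∑ s ∈ range N, b s - H * ∑ s ∈ range N, a s‖ ≤ 2 * H ^ 2 := by
    have : ∑ s ∈ range N, b s - H * ∑ s ∈ range N, a s
        = ∑ j ∈ range H, (∑ s ∈ range N, a (s + j) - ∑ s ∈ range N, a s) := by
      simp only [b, sum_sub_distrib, sum_const, card_range, nsmul_eq_mul]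
      rw [sum_comm]
    rw [this]
    calc _ ≤ ∑ j ∈ range H, (2 * H : ℝ) := (norm_sum_le _ _).trans <| sum_le_sum fun j hj =>
            (norm_sum_range_shift_sub_le a ha N j).trans (by gcongr; exact (mem_range.1 hj).le)
      _ = 2 * H ^ 2 := by simp; ring
  have hcauchy : ‖∑ s ∈ range N, b s‖ ≤ √(N * ∑ s ∈ range N, ‖b s‖ ^ 2) := by
    refine (norm_sum_le _ _).trans (Real.le_sqrt_of_sq_le ?_)
    simpa using sq_sum_le_card_mul_sum_sq (s := range N) (f := fun s => ‖b s‖)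
  calc (H : ℝ) * ‖∑ s ∈ range N, a s‖ = ‖H * ∑ s ∈ range N, a s‖ := by simp
    _ ≤ ‖∑ s ∈ range N, b s‖ + 2 * H ^ 2 := by
        rw [norm_sub_rev] at hwindow
        exact (norm_le_insert' _ _).trans (by gcongr)
    _ ≤ _ := by
        gcongr
        exact hcauchy.trans (Real.sqrt_le_sqrt (by gcongr; exact sum_norm_sq_sum_shift_le a H N))
def correlationSum (a : ℕ → ℂ) (H N : ℕ) : ℝ :=
  ∑ j ∈ range H, ∑ j' ∈ range H,
    if j = j' then 1 else ‖cesaroMean (fun s => a (s + j) * conj (a (s + j'))) N‖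

theorem sum_norm_correlation_le {a : ℕ → ℂ} (ha : ∀ s, ‖a s‖ ≤ 1) (H : ℕ) {N : ℕ} (hN : 0 < N) :
    ∑ j ∈ range H, ∑ j' ∈ range H, ‖∑ s ∈ range N, a (s + j) * conj (a (s + j'))‖ ≤
      N * correlationSum a H N := by
  simp only [correlationSum, mul_sum]
  refine sum_le_sum fun j _ => sum_le_sum fun j' _ => ?_
  split_ifs with h
  · subst h
    refine (norm_sum_le _ _).trans ?_
    simpa using sum_le_sum (s := range N) fun s _ =>
      show ‖a (s + j) * conj (a (s + j))‖ ≤ 1 by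
        simpa using mul_le_one₀ (ha _) (norm_nonneg _) (ha _)
  · rw [norm_cesaroMean, mul_div_cancel₀ _ (by positivity)]

theorem norm_cesaroMean_le_correlationSum {a : ℕ → ℂ} (ha : ∀ s, ‖a s‖ ≤ 1) {H N : ℕ}
    (hH : 0 < H) (hN : 0 < N) :
    ‖cesaroMean a N‖ ≤ √(correlationSum a H N) / H + 2 * H / N := by
  have hsqrt : √(N * ∑ j ∈ range H, ∑ j' ∈ range H,
      ‖∑ s ∈ range N, a (s + j) * conj (a (s + j'))‖) ≤ N * √(correlationSum a H N) := by
    calc _ ≤ √(N * (N * correlationSum a H N)) := by gcongr; exact sum_norm_correlation_le ha H hN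
      _ = N * √(correlationSum a H N) := by
        rw [← mul_assoc, Real.sqrt_mul (by positivity), Real.sqrt_mul_self (by positivity)]
  have hH' : (0 : ℝ) < H := by exact_mod_cast hH
  have hN' : (0 : ℝ) < N := by exact_mod_cast hN
  rw [norm_cesaroMean, div_le_iff₀ hN', ← mul_le_mul_iff_of_pos_left hH']
  calc (H : ℝ) * ‖∑ s ∈ range N, a s‖ ≤ N * √(correlationSum a H N) + 2 * H ^ 2 :=
        (van_der_corput_inequality a ha H N).trans (by gcongr)
    _ = H * ((√(correlationSum a H N) / H + 2 * H / N) * N) := by field_simp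

theorem tendsto_correlationSum {a : ℕ → ℂ}
    (hcorr : ∀ j j', j ≠ j' →
      Tendsto (cesaroMean fun s => a (s + j) * conj (a (s + j'))) atTop (𝓝 0)) (H : ℕ) :
    Tendsto (correlationSum a H) atTop (𝓝 H) := by
  have : Tendsto (correlationSum a H) atTop
      (𝓝 (∑ j ∈ range H, ∑ j' ∈ range H, if j = j' then (1 : ℝ) else 0)) := by
    refine tendsto_finsetSum _ fun j _ => tendsto_finsetSum _ fun j' _ => ?_
    split_ifs with h
    · exact tendsto_const_nhds
    · exact tendsto_norm_zero.comp (hcorr j j' h)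
  rwa [sum_congr rfl fun j hj => by rw [sum_ite_eq, if_pos hj], sum_const, card_range,
    nsmul_one] at this

theorem tendsto_cesaroMean_of_correlations {a : ℕ → ℂ} (ha : ∀ s, ‖a s‖ ≤ 1)
    (hcorr : ∀ j j', j ≠ j' →
      Tendsto (cesaroMean fun s => a (s + j) * conj (a (s + j'))) atTop (𝓝 0)) :
    Tendsto (cesaroMean a) atTop (𝓝 0) := by
  rw [Metric.tendsto_nhds]
  intro ε hε
  obtain ⟨H, hH⟩ := exists_nat_gt (1 / ε ^ 2)
  have hH0 : (0 : ℝ) < H := lt_trans (by positivity) hH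
  have hlim : Tendsto (fun N : ℕ => √(correlationSum a H N) / H + 2 * H / N) atTop
      (𝓝 (√H / H + 0)) :=
    (((tendsto_correlationSum hcorr H).sqrt).div_const _).add
      (tendsto_const_div_atTop_nhds_zero_nat _)
  have hsmall : √H / H + 0 < ε := by
    have : 1 / ε < √H := Real.lt_sqrt_of_sq_lt (by rwa [div_pow, one_pow])
    rwa [add_zero, Real.sqrt_div_self', one_div_lt (by positivity) hε]
  filter_upwards [hlim.eventually (gt_mem_nhds hsmall), eventually_gt_atTop 0] with N hN hN0
  rw [dist_zero_right]
  exact (norm_cesaroMean_le_correlationSum ha (by exact_mod_cast hH0) hN0).trans_lt hN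

theorem AddCircle.toCircle_sum {T : ℝ} {κ : Type*} (s : Finset κ) (f : κ → AddCircle T) :
    toCircle (∑ k ∈ s, f k) = ∏ k ∈ s, toCircle (f k) :=
  map_sum (toCircle_addChar.toAddMonoidHom) f s

theorem AddCircle.coe_toCircle_mul_conj {T : ℝ} (x y : AddCircle T) :
    (toCircle x : ℂ) * conj (toCircle y : ℂ) = toCircle (x - y) := by
  rw [← Circle.coe_inv_eq_conj, ← Circle.coe_mul, ← toCircle_neg, ← toCircle_add, sub_eq_add_neg]

theorem tendsto_cesaroMean_toCircle_linear {β : UnitAddCircle} (hβ : β ≠ 0) (γ : UnitAddCircle) :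
    Tendsto (cesaroMean fun s => (toCircle (s • β + γ) : ℂ)) atTop (𝓝 0) := by
  have hne : (toCircle β : ℂ) ≠ 1 := by
    rw [← Circle.coe_one, Ne, Circle.coe_inj, ← toCircle_zero]
    exact (injective_toCircle one_ne_zero).ne hβ
  have := (tendsto_cesaroMean_pow (Circle.norm_coe _) hne).const_mul (toCircle γ : ℂ)
  rw [mul_zero] at this
  refine this.congr fun N => ?_
  rw [← cesaroMean_const_mul]
  congr 1
  ext s
  rw [toCircle_add, toCircle_nsmul, Circle.coe_mul, Circle.coe_pow, mul_comm]

theorem tendsto_cesaroMean_toCircle_quadratic {A : UnitAddCircle} (hA : ¬IsOfFinAddOrder A)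
    (B C : UnitAddCircle) :
    Tendsto (cesaroMean fun s => (toCircle ((s ^ 2) • A + s • B + C) : ℂ)) atTop (𝓝 0) := by
  refine tendsto_cesaroMean_of_correlations (fun s => (Circle.norm_coe _).le) fun j j' hjj' => ?_
  have hne : (2 * ((j : ℤ) - j')) • A ≠ 0 := fun h =>
    hA (isOfFinAddOrder_iff_zsmul_eq_zero.mpr ⟨_, by omega, h⟩)
  refine (tendsto_cesaroMean_toCircle_linear hne
    ((((j : ℤ) ^ 2 - j' ^ 2)) • A + ((j : ℤ) - j') • B)).congr fun N => ?_
  congr 1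
  ext s
  rw [coe_toCircle_mul_conj]
  congr 2
  simp only [← natCast_zsmul]
  push_cast
  module

instance : IsProbabilityMeasure (volume : Measure UnitAddCircle) :=
  ⟨by simp [AddCircle.measure_univ]⟩

namespace UnitAddTorus

variable {ι κ : Type*} [Fintype ι] [Fintype κ]

theorem mFourier_apply_eq_toCircle (n : ι → ℤ) (x : UnitAddTorus ι) :
    mFourier n x = toCircle (∑ i, n i • x i) := by
  simp only [mFourier, ContinuousMap.coe_mk, fourier_apply]
  rw [toCircle_sum]
  exact (map_prod Circle.coeHom _ _).symm

theorem mFourier_apply_add (n : ι → ℤ) (x y : UnitAddTorus ι) :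
    mFourier n (x + y) = mFourier n x * mFourier n y := by
  simp only [mFourier_apply_eq_toCircle, Pi.add_apply, smul_add, sum_add_distrib, toCircle_add,
    Circle.coe_mul]

theorem exists_mFourier_ne_one {n : ι → ℤ} (hn : n ≠ 0) : ∃ y, mFourier n y ≠ 1 := by
  classical
  obtain ⟨i, hi⟩ := Function.ne_iff.mp hn
  refine ⟨Pi.single i ((1 / 2 / n i : ℝ) : UnitAddCircle), ?_⟩
  have hsingle : mFourier n (Pi.single i ((1 / 2 / n i : ℝ) : UnitAddCircle))
      = fourier (n i) (0 + ((1 / 2 / n i : ℝ) : UnitAddCircle)) := by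
    rw [mFourier_apply_eq_toCircle, Fintype.sum_eq_single i fun j hj => by simp [hj], zero_add,
      Pi.single_eq_same, fourier_apply]
  rw [hsingle, fourier_add_half_inv_index hi one_pos, fourier_eval_zero]
  norm_num

theorem integral_mFourier (n : ι → ℤ) : ∫ y, mFourier n y = if n = 0 then 1 else 0 := by
  split_ifs with hn
  · simp [hn, mFourier_zero]
  obtain ⟨y, hy⟩ := exists_mFourier_ne_one hn
  have hinv := integral_add_right_eq_self (μ := volume) (fun x => mFourier n x) y
  simp only [mFourier_apply_add, integral_mul_const] at hinv
  have : (∫ x, mFourier n x) * (mFourier n y - 1) = 0 := by rw [mul_sub, hinv, mul_one, sub_self]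
  exact (mul_eq_zero.mp this).resolve_right (sub_ne_zero.mpr hy)

theorem integrable_continuousMap (g : C(UnitAddTorus ι, ℂ)) : Integrable g :=
  g.continuous.integrable_of_hasCompactSupport (.of_compactSpace _)

theorem isClosed_setOf_tendsto_cesaroMean_integral (x : ℕ → UnitAddTorus ι) :
    IsClosed {g : C(UnitAddTorus ι, ℂ) |
      Tendsto (cesaroMean fun s => g (x s)) atTop (𝓝 (∫ y, g y))} := by
  refine Equicontinuous.isClosed_setOfPred_tendsto
    (Metric.equicontinuous_of_continuity_modulus id tendsto_id _ fun g h N => ?_) ?_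
  · rw [dist_eq_norm, ← cesaroMean_sub, dist_eq_norm]
    exact norm_cesaroMean_le (fun s => (g - h).norm_coe_le_norm (x s)) N
  · refine (LipschitzWith.of_dist_le_mul fun g h => ?_).continuous (K := 1)
    rw [dist_eq_norm, ← integral_sub (integrable_continuousMap g) (integrable_continuousMap h),
      NNReal.coe_one, one_mul, dist_eq_norm]
    simpa using norm_integral_le_of_norm_le_const (μ := volume)
      (Eventually.of_forall fun y => (g - h).norm_coe_le_norm y)

theorem tendsto_cesaroMean_integral_of_weyl {x : ℕ → UnitAddTorus ι}
    (hx : ∀ n ≠ 0, Tendsto (cesaroMean fun s => mFourier n (x s)) atTop (𝓝 0))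
    (f : C(UnitAddTorus ι, ℂ)) :
    Tendsto (cesaroMean fun s => f (x s)) atTop (𝓝 (∫ y, f y)) := by
  set S := {g : C(UnitAddTorus ι, ℂ) |
    Tendsto (cesaroMean fun s => g (x s)) atTop (𝓝 (∫ y, g y))}
  set P := Submodule.span ℂ (Set.range (mFourier (d := ι)))
  have hspan : (P : Set C(UnitAddTorus ι, ℂ)) ⊆ S := by
    intro g hg
    induction hg using Submodule.span_induction with
    | mem g hg =>
      obtain ⟨n, rfl⟩ := hg
      by_cases hn : n = 0
      · simpa [S, hn, mFourier_zero] using tendsto_cesaroMean_one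
      · simpa [S, integral_mFourier, hn] using hx n hn
    | zero =>
      have : (cesaroMean fun _ => (0 : ℂ)) = fun _ => 0 := funext fun N => by simp [cesaroMean]
      simp [S, this]
    | add g h _ _ hg hh =>
      simpa [S, integral_add (integrable_continuousMap g) (integrable_continuousMap h),
        ← cesaroMean_add] using hg.add hh
    | smul c g _ hg =>
      simpa [S, integral_const_mul, ← cesaroMean_const_mul] using hg.const_mul c
  have hf : f ∈ closure (P : Set C(UnitAddTorus ι, ℂ)) := by
    rw [← Submodule.topologicalClosure_coe, span_mFourier_closure_eq_top]
    trivial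
  exact closure_minimal hspan (isClosed_setOf_tendsto_cesaroMean_integral x) hf

theorem frequently_mem_ball_of_weyl {x : ℕ → UnitAddTorus ι}
    (hx : ∀ n ≠ 0, Tendsto (cesaroMean fun s => mFourier n (x s)) atTop (𝓝 0))
    (a : UnitAddTorus ι) {ε : ℝ} (hε : 0 < ε) :
    ∃ᶠ s in atTop, x s ∈ Metric.ball a ε := by
  set bump : C(UnitAddTorus ι, ℝ) := ⟨fun y => max 0 (ε - dist y a), by fun_prop⟩
  have hbump_pos : 0 < ∫ y, bump y :=
    bump.continuous.integral_pos_of_hasCompactSupport_nonneg_nonzero (x := a)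
      (.of_compactSpace _) (fun y => le_max_left _ _) (by simpa [bump] using hε)
  have hlim := tendsto_cesaroMean_integral_of_weyl hx
    ⟨fun y => (bump y : ℂ), by fun_prop⟩
  simp only [ContinuousMap.coe_mk, integral_complex_ofReal] at hlim
  intro hfin
  obtain ⟨S₀, hS₀⟩ := eventually_atTop.mp hfin
  have hzero : ∀ s, S₀ ≤ s → bump (x s) = 0 := fun s hs => by
    have := hS₀ s hs
    simp only [Metric.mem_ball, not_lt] at this
    simp [bump, this]
  have hlim_zero : Tendsto (cesaroMean fun s => (bump (x s) : ℂ)) atTop (𝓝 0) := by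
    refine squeeze_zero_norm' ((eventually_ge_atTop S₀).mono fun N hN => ?_)
      (tendsto_const_div_atTop_nhds_zero_nat ‖∑ s ∈ range S₀, (bump (x s) : ℂ)‖)
    rw [norm_cesaroMean, sum_subset (range_mono hN) fun s _ hs => ?_]
    simp [hzero s (by simpa using hs)]
  have := tendsto_nhds_unique hlim hlim_zero
  exact hbump_pos.ne' (by exact_mod_cast this)

theorem not_isOfFinAddOrder_sum_zsmul {α : UnitAddTorus ι} (hα : DenseRange fun k : ℤ => k • α)
    {n : ι → ℤ} (hn : n ≠ 0) : ¬IsOfFinAddOrder (∑ i, n i • α i) := by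
  rw [isOfFinAddOrder_iff_zsmul_eq_zero]
  rintro ⟨q, hq, hqn⟩
  obtain ⟨y, hy⟩ := exists_mFourier_ne_one (smul_ne_zero hq hn)
  have hone : ⇑(mFourier (q • n)) = fun _ => 1 := by
    refine hα.equalizer (mFourier (q • n)).continuous continuous_const (funext fun k => ?_)
    have : ∑ i, (q • n) i • (k • α) i = k • q • ∑ i, n i • α i := by
      simp only [smul_sum, Pi.smul_apply, smul_smul, smul_eq_mul]
      exact sum_congr rfl fun i _ => by ring_nf
    simp only [Function.comp_apply, mFourier_apply_eq_toCircle, this, hqn, smul_zero,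
      toCircle_zero, Circle.coe_one]
  exact hy (congrFun hone y)

def quadraticOrbit (α : UnitAddTorus ι) (a b e : κ → ℤ) (s : ℕ) : UnitAddTorus (κ × ι) :=
  fun p => (a p.1 * s ^ 2 + b p.1 * s + e p.1) • α p.2

theorem mFourier_quadraticOrbit (α : UnitAddTorus ι) (a b e : κ → ℤ) (n : κ × ι → ℤ) (s : ℕ) :
    mFourier n (quadraticOrbit α a b e s) =
      toCircle (s ^ 2 • ∑ i, (∑ k, n (k, i) * a k) • α i + s • ∑ i, (∑ k, n (k, i) * b k) • α i
        + ∑ i, (∑ k, n (k, i) * e k) • α i) := by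
  rw [mFourier_apply_eq_toCircle, Fintype.sum_prod_type_right]
  congr 2
  simp only [smul_sum, sum_smul, ← sum_add_distrib, ← natCast_zsmul, quadraticOrbit]
  refine sum_congr rfl fun i _ => sum_congr rfl fun k _ => ?_
  push_cast
  module

theorem tendsto_cesaroMean_mFourier_quadraticOrbit {α : UnitAddTorus ι}
    (hα : DenseRange fun k : ℤ => k • α) {a b : κ → ℤ} (e : κ → ℤ)
    (hab : ∀ c : κ → ℤ, ∑ k, c k * a k = 0 → ∑ k, c k * b k = 0 → c = 0)
    {n : κ × ι → ℤ} (hn : n ≠ 0) :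
    Tendsto (cesaroMean fun s => mFourier n (quadraticOrbit α a b e s)) atTop (𝓝 0) := by
  simp_rw [mFourier_quadraticOrbit]
  by_cases hA : (fun i => ∑ k, n (k, i) * a k) = 0
  · have hB : (fun i => ∑ k, n (k, i) * b k) ≠ 0 := fun hB => hn <| funext fun ⟨k, i⟩ =>
      congrFun (hab (fun k => n (k, i)) (congrFun hA i) (congrFun hB i)) k
    have hβ : ∑ i, (∑ k, n (k, i) * b k) • α i ≠ 0 := fun h0 =>
      not_isOfFinAddOrder_sum_zsmul hα hB (h0 ▸ IsOfFinAddOrder.zero)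
    have hA' : ∀ i, ∑ k, n (k, i) * a k = 0 := congrFun hA
    simpa [hA'] using tendsto_cesaroMean_toCircle_linear hβ (∑ i, (∑ k, n (k, i) * e k) • α i)
  · exact tendsto_cesaroMean_toCircle_quadratic (not_isOfFinAddOrder_sum_zsmul hα hA) _ _

theorem frequently_forall_norm_quadratic_zsmul_lt {α : UnitAddTorus ι}
    (hα : DenseRange fun k : ℤ => k • α) {a b : κ → ℤ} (e : κ → ℤ)
    (hab : ∀ c : κ → ℤ, ∑ k, c k * a k = 0 → ∑ k, c k * b k = 0 → c = 0) {ε : ℝ} (hε : 0 < ε) :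
    ∃ᶠ s : ℕ in atTop, ∀ k, ‖(a k * s ^ 2 + b k * s + e k) • α‖ < ε := by
  refine (frequently_mem_ball_of_weyl
    (fun n hn => tendsto_cesaroMean_mFourier_quadraticOrbit hα e hab hn) 0 hε).mono
    fun s hs k => ?_
  rw [mem_ball_zero_iff, pi_norm_lt_iff hε] at hs
  exact (pi_norm_lt_iff hε).2 fun i => hs (k, i)

theorem exists_mul_sub_sq_eq_of_denseRange {α : UnitAddTorus ι}
    (hα : DenseRange fun k : ℤ => k • α) (D : ℤ) {ε : ℝ} (hε : 0 < ε) :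
    ∃ t u v : ℤ, t * v - u ^ 2 = D ∧ ‖t • α‖ < ε ∧ ‖u • α‖ < ε ∧ ‖v • α‖ < ε := by
  obtain ⟨w, hwα, hwD⟩ := ((frequently_forall_norm_quadratic_zsmul_lt hα (a := ![1]) (b := ![0])
    ![D] (fun c hc _ => by simpa [funext_iff, Fin.forall_fin_one] using hc) hε).and_eventually
    (eventually_gt_atTop D.natAbs)).exists
  set v : ℤ := (w : ℤ) ^ 2 + D
  have hv : 0 < v := by
    have hw : |D| < w := by rw [← Int.natCast_natAbs]; exact_mod_cast hwD
    nlinarith [abs_nonneg D, neg_abs_le D]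
  obtain ⟨s, hs⟩ := (frequently_forall_norm_quadratic_zsmul_lt hα (a := ![0, v])
    (b := ![v, 2 * w]) ![w, 1] (fun c h₁ h₂ => by
      simp only [Fin.sum_univ_two, Matrix.cons_val_zero, Matrix.cons_val_one] at h₁ h₂
      have hc₁ : c 1 = 0 := by simpa [hv.ne'] using h₁
      have hc₀ : c 0 = 0 := by simpa [hc₁, hv.ne'] using h₂
      funext i
      fin_cases i <;> assumption) hε).exists
  refine ⟨v * s ^ 2 + 2 * w * s + 1, v * s + w, v, by ring, ?_, ?_, ?_⟩
  · simpa using hs 1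
  · simpa using hs 0
  · simpa [v] using hwα 0

end UnitAddTorus

/-- The set of discriminants `x y - z²` over a Bohr-zero non-periodic set of integers is
all of `ℤ`. -/
theorem discriminants_of_bohrZero_nonperiodic (B : Set ℤ) (hB : IsBohrZeroNonPeriodic B) :
    {D : ℤ | ∃ x ∈ B, ∃ y ∈ B, ∃ z ∈ B, x * y - z ^ 2 = D} = Set.univ := by
  obtain ⟨m, -, τ, U, hτ, hU, h0U, rfl⟩ := hB
  obtain ⟨δ, hδ, hball⟩ := Metric.isOpen_iff.mp hU 0 h0U
  have hτα : ⇑τ = fun k : ℤ => k • τ 1 := funext (AddMonoidHom.apply_int _ τ)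
  have hmem : ∀ k, ‖k • τ 1‖ < δ → k ∈ τ ⁻¹' U := fun k hk =>
    hball (mem_ball_zero_iff.mpr (by rwa [AddMonoidHom.apply_int _ τ k]))
  refine Set.eq_univ_of_forall fun D => ?_
  obtain ⟨t, u, v, hD, ht, hu, hv⟩ :=
    UnitAddTorus.exists_mul_sub_sq_eq_of_denseRange (hτα ▸ hτ) D (by positivity : 0 < δ / 4)
  refine ⟨t, hmem t (by linarith), t + u + u + v, hmem _ ?_, t + u, hmem _ ?_,
    by linear_combination hD⟩
  · rw [add_zsmul, add_zsmul, add_zsmul]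
    linarith [norm_add₄_le (a := t • τ 1) (b := u • τ 1) (c := u • τ 1) (d := v • τ 1)]
  · rw [add_zsmul]
    linarith [norm_add_le (t • τ 1) (u • τ 1)]

end
end

section
/- Let d ≥ 3 and let B_d ∈ SL_d(ℤ) be the block-diagonal matrix whose upper-left 2×2 block is [[1, −1], [−1, 2]] and whose lower-right (d−2)×(d−2) block is the identity (all other entries zero). The linear operator on Mat_d^0(ℝ) given by v ↦ B_d⁻¹ v B_d has characteristic polynomial (X − 1)^{(d−2)² + 1} · (X² − 7X + 1) · (X² − 3X + 1)^{2(d−2)}; in particular its eigenvalues are (7 + 3√5)/2, (3 + √5)/2, 1, (3 − √5)/2, (7 − 3√5)/2 with algebraic multiplicities 1, 2(d−2), (d−2)² + 1, 2(d−2), 1 respectively, so the operator is proximal. -/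
/-! Conjugation by `B_d = diag(A, 1)` preserves the block decomposition of a `d × d` matrix and
acts on the four blocks by `p ↦ A⁻¹ p A`, `q ↦ A⁻¹ q`, `r ↦ r A` and `s ↦ s`. The middle two are
`d - 2` copies of `A⁻¹` and of `A`, both with characteristic polynomial `X² - 3X + 1`, the last
contributes `(X - 1)^((d-2)²)`, and the first is an explicit `4 × 4` computation giving
`(X - 1)² (X² - 7X + 1)`. On all matrices the identity is fixed and spans a complement of the
trace-zero matrices, which accounts for one factor `X - 1`.

With `φ` the golden ratio and `ψ = -φ⁻¹`, the eigenvalues are `1`, `φ², ψ²`, `φ⁴, ψ⁴`; since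
`φ > 1 > |ψ|`, the eigenvalue `φ⁴` is simple and strictly dominates all the others. -/

open MeasureTheory Filter Topology Polynomial

noncomputable section

/-- The real vector space of trace-zero matrices, as a submodule. -/
def mat0Submodule (n : Type*) [Fintype n] : Submodule ℝ (Matrix n n ℝ) where
  carrier := {A | Matrix.trace A = 0}
  zero_mem' := by simp
  add_mem' := by
    intro a b ha hb
    simp only [Set.mem_setOf_eq, Matrix.trace_add] at *
    rw [ha, hb, add_zero]
  smul_mem' := by
    intro c a ha
    simp only [Set.mem_setOf_eq, Matrix.trace_smul] at *
    rw [ha, smul_zero]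

variable {n : Type*} [Fintype n] [DecidableEq n]

/-- The element of `SL_d(ℝ)` obtained from an element of `SL_d(ℤ)`. -/
def slCast (g : Matrix.SpecialLinearGroup n ℤ) : Matrix.SpecialLinearGroup n ℝ :=
  Matrix.SpecialLinearGroup.map (Int.castRingHom ℝ) g

theorem adjOp_mem (g : Matrix.SpecialLinearGroup n ℤ) (v : Matrix n n ℝ)
    (hv : v ∈ mat0Submodule n) :
    ((slCast g⁻¹ : Matrix.SpecialLinearGroup n ℝ) : Matrix n n ℝ) * v *
      ((slCast g : Matrix.SpecialLinearGroup n ℝ) : Matrix n n ℝ) ∈ mat0Submodule n := by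
  have hv' : Matrix.trace v = 0 := hv
  show Matrix.trace _ = 0
  rw [Matrix.trace_mul_cycle, ← Matrix.SpecialLinearGroup.coe_mul]
  have : slCast (n := n) g * slCast g⁻¹ = 1 := by
    unfold slCast
    rw [← MonoidHom.map_mul, mul_inv_cancel, MonoidHom.map_one]
  rw [this, Matrix.SpecialLinearGroup.coe_one, one_mul, hv']

/-- The adjoint (conjugation) operator `v ↦ g⁻¹ v g` on trace-zero real matrices,
for `g ∈ SL_d(ℤ)`. -/
def adjOp (g : Matrix.SpecialLinearGroup n ℤ) :
    ↥(mat0Submodule n) →ₗ[ℝ] ↥(mat0Submodule n) where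
  toFun v := ⟨((slCast g⁻¹ : Matrix.SpecialLinearGroup n ℝ) : Matrix n n ℝ) * v *
      ((slCast g : Matrix.SpecialLinearGroup n ℝ) : Matrix n n ℝ),
    adjOp_mem g v.1 v.2⟩
  map_add' v w := by
    ext1
    simp [Matrix.mul_add, Matrix.add_mul]
  map_smul' c v := by
    ext1
    simp [Matrix.mul_smul, Matrix.smul_mul]

/-- A linear operator on a finite-dimensional real vector space is proximal if it has a
unique complex eigenvalue of maximal absolute value, and this eigenvalue has algebraic
multiplicity one. Eigenvalues are the complex roots of the characteristic polynomial. -/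
def IsProximal {V : Type*} [AddCommGroup V] [Module ℝ V] [Module.Finite ℝ V] [Module.Free ℝ V]
    (f : V →ₗ[ℝ] V) : Prop :=
  ∃ lam : ℂ, (f.charpoly.map (algebraMap ℝ ℂ)).IsRoot lam ∧
    (f.charpoly.map (algebraMap ℝ ℂ)).rootMultiplicity lam = 1 ∧
    ∀ mu : ℂ, (f.charpoly.map (algebraMap ℝ ℂ)).IsRoot mu → mu ≠ lam →
      ‖mu‖ < ‖lam‖

/-- The matrix `B_d ∈ SL_d(ℤ)`, `d = 2 + m`: block diagonal with upper-left block
`[[1, -1], [-1, 2]]` and lower-right block the identity. -/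
def Bd (m : ℕ) : Matrix.SpecialLinearGroup (Fin 2 ⊕ Fin m) ℤ :=
  ⟨Matrix.fromBlocks !![1, -1; -1, 2] 0 0 1, by
    rw [Matrix.det_fromBlocks_zero₂₁]
    norm_num [Matrix.det_fin_two_of]⟩

namespace Matrix

variable {R : Type*} [CommRing R] {m n o : Type*}

variable (R) in
def fromBlocksLinearEquiv :
    (Matrix m m R × Matrix m n R × Matrix n m R × Matrix n n R) ≃ₗ[R]
      Matrix (m ⊕ n) (m ⊕ n) R where
  toFun x := fromBlocks x.1 x.2.1 x.2.2.1 x.2.2.2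
  invFun M := (M.toBlocks₁₁, M.toBlocks₁₂, M.toBlocks₂₁, M.toBlocks₂₂)
  left_inv _ := by simp
  right_inv := fromBlocks_toBlocks
  map_add' _ _ := (fromBlocks_add ..).symm
  map_smul' _ _ := (fromBlocks_smul ..).symm

theorem transposeLinearEquiv_conj_mulRightLinearMap [Fintype n] (M : Matrix n n R) :
    (transposeLinearEquiv m n R R).conj (mulRightLinearMap m R M) =
      mulLeftLinearMap m R Mᵀ := by
  ext : 1
  simp [transpose_mul]

variable [Fintype m] [Fintype n] [DecidableEq n]

theorem fromBlocksLinearEquiv_symm_conj_mulRight_comp_mulLeft (A B : Matrix m m R) :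
    (fromBlocksLinearEquiv R).symm.conj
        (mulRightLinearMap (m ⊕ n) R (fromBlocks B 0 0 1) ∘ₗ
          mulLeftLinearMap (m ⊕ n) R (fromBlocks A 0 0 1)) =
      (mulRightLinearMap m R B ∘ₗ mulLeftLinearMap m R A).prodMap
        ((mulLeftLinearMap n R A).prodMap ((mulRightLinearMap n R B).prodMap LinearMap.id)) := by
  refine LinearMap.ext fun ⟨p, q, r, s⟩ => ?_
  simp [fromBlocksLinearEquiv, fromBlocks_multiply]

variable [DecidableEq m]

theorem charmatrix_blockDiagonal [Fintype o] [DecidableEq o] (M : o → Matrix n n R) :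
    charmatrix (blockDiagonal M) = blockDiagonal fun k => charmatrix (M k) := by
  ext ⟨i, k⟩ ⟨j, l⟩
  by_cases hkl : k = l
  · subst hkl
    by_cases hij : i = j <;> simp [blockDiagonal_apply, hij]
  · simp [blockDiagonal_apply, hkl]

theorem charpoly_blockDiagonal [Fintype o] [DecidableEq o] (M : o → Matrix n n R) :
    (blockDiagonal M).charpoly = ∏ k, (M k).charpoly := by
  rw [charpoly, charmatrix_blockDiagonal, det_blockDiagonal]
  rfl

theorem toMatrix_stdBasis_apply (f : Matrix m n R →ₗ[R] Matrix m n R) (p q : m × n) :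
    LinearMap.toMatrix (stdBasis R m n) (stdBasis R m n) f p q = f (single q.1 q.2 1) p.1 p.2 := by
  rw [LinearMap.toMatrix_apply, ← stdBasis_eq_single]
  simp [stdBasis]

theorem toMatrix_mulLeftLinearMap (M : Matrix m m R) :
    LinearMap.toMatrix (stdBasis R m n) (stdBasis R m n) (mulLeftLinearMap n R M) =
      blockDiagonal fun _ => M := by
  ext ⟨i, j⟩ ⟨k, l⟩
  rw [toMatrix_stdBasis_apply]
  by_cases hjl : j = l
  · subst hjl
    simp [mul_single_apply_same]
  · simp [blockDiagonal_apply, mul_single_apply_of_ne, hjl]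

theorem charpoly_mulLeftLinearMap (M : Matrix m m R) :
    (mulLeftLinearMap n R M).charpoly = M.charpoly ^ Fintype.card n := by
  rw [← LinearMap.charpoly_toMatrix _ (stdBasis R m n), toMatrix_mulLeftLinearMap,
    charpoly_blockDiagonal, Finset.prod_const, Finset.card_univ]

theorem charpoly_mulRightLinearMap (M : Matrix n n R) :
    (mulRightLinearMap m R M).charpoly = M.charpoly ^ Fintype.card m := by
  rw [← LinearEquiv.charpoly_conj (transposeLinearEquiv m n R R),
    transposeLinearEquiv_conj_mulRightLinearMap, charpoly_mulLeftLinearMap, charpoly_transpose]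

theorem charpoly_linearMap_id :
    (LinearMap.id : Matrix m n R →ₗ[R] Matrix m n R).charpoly =
      (X - 1) ^ (Fintype.card m * Fintype.card n) := by
  rw [← LinearMap.charpoly_toMatrix _ (stdBasis R m n), LinearMap.toMatrix_id, charpoly_one,
    Fintype.card_prod]

theorem charpoly_mulRight_comp_mulLeft_fromBlocks (A B : Matrix m m R) :
    (mulRightLinearMap (m ⊕ n) R (fromBlocks B 0 0 1) ∘ₗ
        mulLeftLinearMap (m ⊕ n) R (fromBlocks A 0 0 1)).charpoly =
      (mulRightLinearMap m R B ∘ₗ mulLeftLinearMap m R A).charpoly *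
        A.charpoly ^ Fintype.card n * B.charpoly ^ Fintype.card n *
          (X - 1) ^ (Fintype.card n * Fintype.card n) := by
  rw [← LinearEquiv.charpoly_conj (fromBlocksLinearEquiv R).symm,
    fromBlocksLinearEquiv_symm_conj_mulRight_comp_mulLeft, LinearMap.charpoly_prodMap,
    LinearMap.charpoly_prodMap, LinearMap.charpoly_prodMap, charpoly_mulLeftLinearMap,
    charpoly_mulRightLinearMap, charpoly_linearMap_id]
  ring

end Matrix

theorem LinearMap.charpoly_eq_mul_of_isCompl {K V : Type*} [Field K] [AddCommGroup V]
    [Module K V] [FiniteDimensional K V] (f : Module.End K V) {p q : Submodule K V}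
    (hpq : IsCompl p q) (hp : ∀ x ∈ p, f x ∈ p) (hq : ∀ x ∈ q, f x ∈ q) :
    f.charpoly = (f.restrict hp).charpoly * (f.restrict hq).charpoly := by
  rw [← LinearMap.charpoly_prodMap, ← (Submodule.prodEquivOfIsCompl p q hpq).charpoly_conj]
  congr 1
  refine LinearMap.ext fun x => ?_
  simp [LinearEquiv.conj_apply, ← map_add, Submodule.projection_add_projection_eq_self]

theorem isCompl_mat0Submodule_span_one [Nonempty n] :
    IsCompl (mat0Submodule n) (ℝ ∙ 1) := by
  change IsCompl (LinearMap.ker (Matrix.traceLinearMap n ℝ ℝ)) _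
  refine Submodule.isCompl_span_singleton_of_isCoatom_of_notMem
    (LinearMap.isCoatom_ker_of_surjective fun t => ?_) ?_
  · exact ⟨Matrix.single (Classical.arbitrary n) (Classical.arbitrary n) t,
      Matrix.trace_single_eq_same ..⟩
  · simp [Fintype.card_ne_zero]

theorem charpoly_eq_charpoly_restrict_mat0Submodule_mul [Nonempty n]
    (f : Module.End ℝ (Matrix n n ℝ)) (hf : ∀ v ∈ mat0Submodule n, f v ∈ mat0Submodule n)
    (hf1 : f 1 = 1) :
    f.charpoly = (f.restrict hf).charpoly * (X - 1) := by
  have hone : ∀ v ∈ ℝ ∙ (1 : Matrix n n ℝ), f v ∈ ℝ ∙ 1 := by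
    intro v hv
    obtain ⟨c, rfl⟩ := Submodule.mem_span_singleton.1 hv
    rwa [map_smul, hf1]
  have hrestrict : f.restrict hone = 1 := by
    ext ⟨v, hv⟩
    obtain ⟨c, rfl⟩ := Submodule.mem_span_singleton.1 hv
    simp [hf1]
  rw [f.charpoly_eq_mul_of_isCompl isCompl_mat0Submodule_span_one hf hone, hrestrict,
    LinearMap.charpoly_one, finrank_span_singleton one_ne_zero, pow_one]

theorem coe_slCast_inv_mul_coe_slCast (g : Matrix.SpecialLinearGroup n ℤ) :
    (slCast g⁻¹ : Matrix n n ℝ) * slCast g = 1 := by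
  rw [← Matrix.SpecialLinearGroup.coe_mul, slCast, slCast, ← map_mul, inv_mul_cancel, map_one,
    Matrix.SpecialLinearGroup.coe_one]

theorem adjOp_eq_restrict (g : Matrix.SpecialLinearGroup n ℤ) :
    adjOp g = (mulRightLinearMap n ℝ (slCast g : Matrix n n ℝ) ∘ₗ
      mulLeftLinearMap n ℝ (slCast g⁻¹ : Matrix n n ℝ)).restrict (adjOp_mem g) :=
  rfl

theorem charpoly_adjOp_mul_X_sub_one [Nonempty n] (g : Matrix.SpecialLinearGroup n ℤ) :
    (adjOp g).charpoly * (X - 1) =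
      (mulRightLinearMap n ℝ (slCast g : Matrix n n ℝ) ∘ₗ
        mulLeftLinearMap n ℝ (slCast g⁻¹ : Matrix n n ℝ)).charpoly := by
  rw [adjOp_eq_restrict]
  refine (charpoly_eq_charpoly_restrict_mat0Submodule_mul _ (adjOp_mem g) ?_).symm
  change (slCast g⁻¹ : Matrix n n ℝ) * 1 * slCast g = 1
  rw [mul_one, coe_slCast_inv_mul_coe_slCast]

theorem isProximal_of_charpoly_map_eq {V : Type*} [AddCommGroup V] [Module ℝ V]
    [Module.Finite ℝ V] [Module.Free ℝ V] (f : V →ₗ[ℝ] V) (lam : ℂ) (Q : ℂ[X])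
    (hf : f.charpoly.map (algebraMap ℝ ℂ) = (X - C lam) * Q)
    (hQ : ∀ mu : ℂ, Q.IsRoot mu → ‖mu‖ < ‖lam‖) :
    IsProximal f := by
  have hQ0 : Q ≠ 0 := by
    rintro rfl
    exact (f.charpoly_monic.map (algebraMap ℝ ℂ)).ne_zero (by simpa using hf)
  refine ⟨lam, by simp [hf], ?_, fun mu hmu hne => hQ mu ?_⟩
  · rw [hf, rootMultiplicity_mul (mul_ne_zero (X_sub_C_ne_zero lam) hQ0),
      rootMultiplicity_X_sub_C_self, rootMultiplicity_eq_zero fun h => (hQ lam h).false]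
  · simpa [hf, sub_eq_zero, hne] using hmu

theorem isProximal_of_charpoly_eq_X_sub_C_mul_prod {V : Type*} [AddCommGroup V] [Module ℝ V]
    [Module.Finite ℝ V] [Module.Free ℝ V] (f : V →ₗ[ℝ] V) (a : ℝ) (s : Multiset ℝ)
    (hf : f.charpoly = (X - C a) * (s.map fun r => X - C r).prod) (hs : ∀ r ∈ s, |r| < |a|) :
    IsProximal f := by
  refine isProximal_of_charpoly_map_eq f a ((s.map fun r : ℝ => X - C (r : ℂ)).prod) ?_ ?_
  · simp [hf, Polynomial.map_multiset_prod, Multiset.map_map]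
  intro mu hmu
  simp only [IsRoot, eval_multiset_prod, Multiset.prod_eq_zero_iff, Multiset.mem_map] at hmu
  obtain ⟨-, ⟨r, hr, rfl⟩, hmu⟩ := hmu
  rw [eval_sub, eval_X, eval_C, sub_eq_zero] at hmu
  simpa [hmu] using hs r hr

theorem X_sq_sub_C_mul_X_add_one_eq {R : Type*} [CommRing R] {a b s : R} (hs : a + b = s)
    (hab : a * b = 1) : (X ^ 2 - C s * X + 1 : R[X]) = (X - C a) * (X - C b) := by
  rw [← C_1, ← hab, ← hs, C_add, C_mul]
  ring

section GoldenRatio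

open goldenRatio

theorem X_sq_sub_three_mul_X_add_one_eq :
    (X ^ 2 - 3 * X + 1 : ℝ[X]) = (X - C (φ ^ 2)) * (X - C (ψ ^ 2)) := by
  rw [← map_ofNat C 3]
  refine X_sq_sub_C_mul_X_add_one_eq ?_ ?_
  · linear_combination Real.goldenRatio_sq + Real.goldenConj_sq + Real.goldenRatio_add_goldenConj
  · rw [← mul_pow, Real.goldenRatio_mul_goldenConj]
    norm_num

theorem X_sq_sub_seven_mul_X_add_one_eq :
    (X ^ 2 - 7 * X + 1 : ℝ[X]) = (X - C (φ ^ 4)) * (X - C (ψ ^ 4)) := by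
  rw [← map_ofNat C 7]
  refine X_sq_sub_C_mul_X_add_one_eq ?_ ?_
  · linear_combination (φ ^ 2 + φ + 2) * Real.goldenRatio_sq +
      (ψ ^ 2 + ψ + 2) * Real.goldenConj_sq + 3 * Real.goldenRatio_add_goldenConj
  · rw [← mul_pow, Real.goldenRatio_mul_goldenConj]
    norm_num

theorem isProximal_of_charpoly_eq {V : Type*} [AddCommGroup V] [Module ℝ V]
    [Module.Finite ℝ V] [Module.Free ℝ V] (f : V →ₗ[ℝ] V) (k l : ℕ)
    (h : f.charpoly = (X - 1) ^ k * (X ^ 2 - 7 * X + 1) * (X ^ 2 - 3 * X + 1) ^ l) :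
    IsProximal f := by
  refine isProximal_of_charpoly_eq_X_sub_C_mul_prod f (φ ^ 4)
    (Multiset.replicate k 1 + {ψ ^ 4} + Multiset.replicate l (φ ^ 2) + Multiset.replicate l (ψ ^ 2))
    ?_ ?_
  · rw [h, X_sq_sub_seven_mul_X_add_one_eq, X_sq_sub_three_mul_X_add_one_eq]
    simp only [Multiset.map_add, Multiset.prod_add, Multiset.map_replicate, Multiset.prod_replicate,
      Multiset.map_singleton, Multiset.prod_singleton, C_1, mul_pow]
    ring
  have hφ2 : 1 < φ ^ 2 := one_lt_pow₀ Real.one_lt_goldenRatio two_ne_zero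
  have hφ4 : φ ^ 2 < |φ ^ 4| := by
    rw [abs_of_pos (by positivity)]
    exact pow_lt_pow_right₀ Real.one_lt_goldenRatio (by norm_num)
  have hψ : |ψ| < 1 := abs_lt.2 ⟨Real.neg_one_lt_goldenConj, Real.goldenConj_neg.trans one_pos⟩
  have hψpow (j : ℕ) (hj : j ≠ 0) : |ψ ^ j| < |φ ^ 4| := by
    rw [abs_pow]
    exact ((pow_lt_one₀ (abs_nonneg ψ) hψ hj).trans hφ2).trans hφ4
  intro r hr
  simp only [Multiset.mem_add, Multiset.mem_replicate, Multiset.mem_singleton] at hr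
  rcases hr with ((⟨-, rfl⟩ | rfl) | ⟨-, rfl⟩) | ⟨-, rfl⟩
  · rw [abs_one]
    exact hφ2.trans hφ4
  · exact hψpow 4 (by norm_num)
  · rwa [abs_of_pos (by positivity : (0 : ℝ) < φ ^ 2)]
  · exact hψpow 2 (by norm_num)

end GoldenRatio

theorem coe_slCast_Bd (m : ℕ) :
    (slCast (Bd m) : Matrix (Fin 2 ⊕ Fin m) (Fin 2 ⊕ Fin m) ℝ) =
      Matrix.fromBlocks !![1, -1; -1, 2] 0 0 1 := by
  rw [slCast, Matrix.SpecialLinearGroup.map_apply_coe, RingHom.mapMatrix_apply, Bd]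
  simp only [Matrix.fromBlocks_map, Matrix.map_zero _ (map_zero _),
    Matrix.map_one _ (map_zero _) (map_one _)]
  congr 1
  ext i j
  fin_cases i <;> fin_cases j <;> simp

theorem coe_slCast_Bd_inv (m : ℕ) :
    (slCast (Bd m)⁻¹ : Matrix (Fin 2 ⊕ Fin m) (Fin 2 ⊕ Fin m) ℝ) =
      Matrix.fromBlocks !![2, 1; 1, 1] 0 0 1 := by
  refine left_inv_eq_right_inv (coe_slCast_inv_mul_coe_slCast _) ?_
  rw [coe_slCast_Bd, Matrix.fromBlocks_multiply, ← Matrix.fromBlocks_one, Matrix.one_fin_two]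
  norm_num

theorem charpoly_mulRight_comp_mulLeft_fin_two :
    (mulRightLinearMap (Fin 2) ℝ !![(1 : ℝ), -1; -1, 2] ∘ₗ
      mulLeftLinearMap (Fin 2) ℝ !![(2 : ℝ), 1; 1, 1]).charpoly =
      (X - 1) ^ 2 * (X ^ 2 - 7 * X + 1) := by
  have hmat : (LinearMap.toMatrix (Matrix.stdBasis ℝ (Fin 2) (Fin 2))
      (Matrix.stdBasis ℝ (Fin 2) (Fin 2)) (mulRightLinearMap (Fin 2) ℝ !![(1 : ℝ), -1; -1, 2] ∘ₗ
        mulLeftLinearMap (Fin 2) ℝ !![(2 : ℝ), 1; 1, 1])).reindex finProdFinEquiv finProdFinEquiv =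
      !![2, -2, 1, -1; -2, 4, -1, 2; 1, -1, 1, -1; -1, 2, -1, 2] := by
    ext i j
    fin_cases i <;> fin_cases j <;>
      norm_num [Matrix.toMatrix_stdBasis_apply, finProdFinEquiv, Fin.divNat, Fin.modNat,
        Matrix.mul_apply, Matrix.single, Matrix.vecHead, Matrix.vecTail]
  rw [← LinearMap.charpoly_toMatrix _ (Matrix.stdBasis ℝ (Fin 2) (Fin 2)),
    ← Matrix.charpoly_reindex finProdFinEquiv, hmat]
  simp [Matrix.charpoly, Matrix.det_succ_row_zero, Fin.sum_univ_succ, Fin.succAbove, map_ofNat]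
  ring

theorem charpoly_adjOp_Bd_eq (m : ℕ) :
    (adjOp (Bd m)).charpoly =
      (X - 1) ^ (m ^ 2 + 1) * (X ^ 2 - 7 * X + 1) * (X ^ 2 - 3 * X + 1) ^ (2 * m) := by
  have h := charpoly_adjOp_mul_X_sub_one (Bd m)
  rw [coe_slCast_Bd, coe_slCast_Bd_inv, Matrix.charpoly_mulRight_comp_mulLeft_fromBlocks,
    charpoly_mulRight_comp_mulLeft_fin_two, Matrix.charpoly_fin_two, Matrix.charpoly_fin_two,
    Fintype.card_fin] at h
  simp only [Matrix.trace_fin_two_of, Matrix.det_fin_two_of] at h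
  norm_num [map_ofNat] at h
  refine mul_right_cancel₀ (X_sub_C_ne_zero 1) ?_
  rw [C_1, h]
  ring

theorem charpoly_adjOp_Bd_general (d : ℕ) :
    (adjOp (Bd (d - 2))).charpoly =
        (X - 1) ^ ((d - 2) ^ 2 + 1) * (X ^ 2 - 7 * X + 1) *
          (X ^ 2 - 3 * X + 1) ^ (2 * (d - 2)) ∧
      IsProximal (adjOp (Bd (d - 2))) :=
  ⟨charpoly_adjOp_Bd_eq _, isProximal_of_charpoly_eq _ _ _ (charpoly_adjOp_Bd_eq _)⟩

/-- **Proposition.** For `d ≥ 3`, conjugation by `B_d` on the trace-zero real `d × d`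
matrices has characteristic polynomial
`(X - 1)^{(d-2)² + 1} (X² - 7X + 1)(X² - 3X + 1)^{2(d-2)}`; in particular its eigenvalues
are `(7 ± 3√5)/2`, `(3 ± √5)/2` and `1`, with multiplicities `1, 2(d-2), (d-2)² + 1,
2(d-2), 1`, and it is proximal. -/
theorem charpoly_adjOp_Bd (d : ℕ) (hd : 3 ≤ d) :
    (adjOp (Bd (d - 2))).charpoly =
        (X - 1) ^ ((d - 2) ^ 2 + 1) * (X ^ 2 - 7 * X + 1) *
          (X ^ 2 - 3 * X + 1) ^ (2 * (d - 2)) ∧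
      IsProximal (adjOp (Bd (d - 2))) :=
  charpoly_adjOp_Bd_general d

end
end

section
/- Let G be a countable abelian group, let τ : G → 𝕋^n (n ≥ 1) be a group homomorphism with dense image, let (F_k) be a Følner sequence in G, and let A ⊆ 𝕋^n be a Jordan measurable set (its topological boundary has Haar measure zero). Then (1/|F_k|) · #{g ∈ F_k : τ(g) ∈ A} → m(A) as k → ∞, where m is the normalized Haar measure on 𝕋^n. -/
open MeasureTheory Filter Topology Polynomial

noncomputable section

/-- A Følner sequence in an abelian group: a sequence of nonempty finite sets that is
asymptotically invariant under every translation. -/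
def IsFolnerSeq {G : Type*} [AddCommGroup G] (F : ℕ → Finset G) : Prop :=
  (∀ k, (F k).Nonempty) ∧
    ∀ g : G, Tendsto
      (fun k => (((F k : Set G) ∩ ((· + g) '' (F k : Set G))).ncard : ℝ) / (F k).card)
      atTop (𝓝 1)

/-- Upper Banach density of a subset of a countable abelian group. -/
def upperBanachDensity {G : Type*} [AddCommGroup G] (B : Set G) : ℝ :=
  sSup {x : ℝ | ∃ F : ℕ → Finset G, IsFolnerSeq F ∧
    x = Filter.limsup (fun k => (((F k : Set G) ∩ B).ncard : ℝ) / (F k).card) atTop}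

/-!
Weyl's criterion along Følner sequences. If `χ` is a nontrivial character of `𝕋ⁿ`, density of
`τ` makes `χ ∘ τ` a nontrivial character of `G`; translating `F k` by some `g` with
`χ (τ g) ≠ 1` multiplies the average of `χ ∘ τ` over `F k` by `χ (τ g)` while changing it only by
`o(1)`, so these averages tend to `0 = ∫ χ`. Trigonometric polynomials are dense in `C(𝕋ⁿ, ℂ)`
(Stone–Weierstrass), hence the empirical measures of `τ` on `F k` converge weakly to Haar measure,
and the portmanteau theorem gives convergence on every set whose frontier is Haar-null.
-/

open Finset
open scoped ENNReal BigOperators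

section Folner

variable {G : Type*} [AddCommGroup G] {F : ℕ → Finset G}

lemma norm_sum_sub_sum_le_card_sdiff {α E : Type*} [DecidableEq α] [SeminormedAddCommGroup E]
    {s t : Finset α} {f : α → E} {C : ℝ} (hf : ∀ x, ‖f x‖ ≤ C) :
    ‖∑ x ∈ t, f x - ∑ x ∈ s, f x‖ ≤ C * (#(t \ s) + #(s \ t)) := by
  rw [← sum_sdiff_sub_sum_sdiff, mul_add]
  refine (norm_sub_le _ _).trans (add_le_add ?_ ?_) <;>
  · refine (norm_sum_le _ _).trans ?_
    simpa [mul_comm] using sum_le_sum fun x _ => hf x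

lemma IsFolnerSeq.tendsto_card_sdiff_div [DecidableEq G] (hF : IsFolnerSeq F) (g : G) :
    Tendsto (fun k => (#(F k \ (F k).image (· + g)) : ℝ) / #(F k)) atTop (𝓝 0) := by
  have h := (hF.2 g).const_sub 1
  rw [sub_self] at h
  refine h.congr fun k => ?_
  have hcard : (#(F k) : ℝ) ≠ 0 := by simpa using (hF.1 k).ne_empty
  have hsplit := card_sdiff_add_card_inter (F k) ((F k).image (· + g))
  rw [← coe_image, ← coe_inter, Set.ncard_coe_finset, eq_div_iff hcard, sub_mul,
    div_mul_cancel₀ _ hcard, one_mul, ← hsplit]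
  push_cast
  ring

lemma IsFolnerSeq.tendsto_expect_add_sub_expect (hF : IsFolnerSeq F) {f : G → ℂ} {C : ℝ}
    (hf : ∀ x, ‖f x‖ ≤ C) (g : G) :
    Tendsto (fun k => 𝔼 x ∈ F k, f (x + g) - 𝔼 x ∈ F k, f x) atTop (𝓝 0) := by
  classical
  have hbound (k : ℕ) : ‖𝔼 x ∈ F k, f (x + g) - 𝔼 x ∈ F k, f x‖
      ≤ 2 * C * (#(F k \ (F k).image (· + g)) / #(F k)) := by
    have hcard : #((F k).image (· + g)) = #(F k) :=
      card_image_of_injective _ (add_left_injective g)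
    calc ‖𝔼 x ∈ F k, f (x + g) - 𝔼 x ∈ F k, f x‖
        = ‖∑ y ∈ (F k).image (· + g), f y - ∑ x ∈ F k, f x‖ / #(F k) := by
          rw [expect_eq_sum_div_card, expect_eq_sum_div_card, ← sub_div, norm_div,
            Complex.norm_natCast, sum_image fun x _ y _ => (add_left_injective g).eq_iff.mp]
      _ ≤ C * (#((F k).image (· + g) \ F k) + #(F k \ (F k).image (· + g))) / #(F k) := by
          gcongr
          exact norm_sum_sub_sum_le_card_sdiff hf
      _ = 2 * C * (#(F k \ (F k).image (· + g)) / #(F k)) := by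
          rw [card_sdiff_comm hcard]
          ring
  refine squeeze_zero_norm hbound ?_
  simpa using (hF.tendsto_card_sdiff_div g).const_mul (2 * C)

lemma IsFolnerSeq.tendsto_expect_addChar_zero (hF : IsFolnerSeq F) {ψ : AddChar G ℂ} (hψ : ψ ≠ 1)
    {C : ℝ} (hC : ∀ x, ‖ψ x‖ ≤ C) :
    Tendsto (fun k => 𝔼 x ∈ F k, ψ x) atTop (𝓝 0) := by
  obtain ⟨g, hg⟩ := AddChar.ne_one_iff.mp hψ
  have hg' : ψ g - 1 ≠ 0 := sub_ne_zero.mpr hg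
  have h := (hF.tendsto_expect_add_sub_expect hC g).const_mul (ψ g - 1)⁻¹
  rw [mul_zero] at h
  refine h.congr fun k => ?_
  simp_rw [AddChar.map_add_eq_mul, ← expect_mul]
  field_simp

end Folner

lemma AddChar.integral_eq_zero_of_ne_one {X 𝕜 : Type*} [AddGroup X] [MeasurableSpace X]
    [MeasurableAdd X] [RCLike 𝕜] {μ : Measure X} [μ.IsAddLeftInvariant] {ψ : AddChar X 𝕜}
    (hψ : ψ ≠ 1) : ∫ x, ψ x ∂μ = 0 := by
  obtain ⟨y, hy⟩ := AddChar.ne_one_iff.mp hψ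
  have hinv : ψ y * ∫ x, ψ x ∂μ = ∫ x, ψ x ∂μ := by
    rw [← integral_const_mul]
    simp_rw [← AddChar.map_add_eq_mul]
    exact integral_add_left_eq_self (fun x => ψ x) y
  have hzero : (ψ y - 1) * ∫ x, ψ x ∂μ = 0 := by rw [sub_mul, hinv, one_mul, sub_self]
  exact (mul_eq_zero.mp hzero).resolve_left (sub_ne_zero.mpr hy)

lemma AddChar.compAddMonoidHom_ne_one_of_denseRange {A B M : Type*} [AddMonoid A]
    [AddMonoid B] [TopologicalSpace B] [Monoid M] [TopologicalSpace M] [T2Space M]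
    {ψ : AddChar B M} (hψ : ψ ≠ 1) (hψc : Continuous ψ) {τ : A →+ B} (hτ : DenseRange τ) :
    ψ.compAddMonoidHom τ ≠ 1 := by
  intro h
  refine hψ (AddChar.ext _ _ fun x => ?_)
  have hcomp : ψ ∘ τ = (fun _ => 1) ∘ τ := funext fun a => by
    simpa using congrArg (· a) h
  simpa using congrFun (hτ.equalizer hψc continuous_const hcomp) x

section Empirical

variable {ι X : Type*} [MeasurableSpace X]

def empiricalMeasure (s : Finset ι) (hs : s.Nonempty) (x : ι → X) : ProbabilityMeasure X :=
  ⟨(#s : ℝ≥0∞)⁻¹ • ∑ i ∈ s, Measure.dirac (x i),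
    ⟨by simp [Measure.finsetSum_apply, ENNReal.inv_mul_cancel, hs.ne_empty]⟩⟩

variable (s : Finset ι) (hs : s.Nonempty) (x : ι → X) [MeasurableSingletonClass X]

lemma empiricalMeasure_apply (A : Set X) :
    (empiricalMeasure s hs x : Measure X) A = ((s : Set ι) ∩ x ⁻¹' A).ncard / #s := by
  classical
  have hfilter : (s : Set ι) ∩ x ⁻¹' A = ↑{i ∈ s | x i ∈ A} := by ext; simp
  rw [hfilter, Set.ncard_coe_finset]
  simp [empiricalMeasure, Measure.finsetSum_apply, Measure.dirac_apply, Set.indicator_apply,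
    sum_boole, ENNReal.div_eq_inv_mul]

lemma integral_empiricalMeasure (f : X → ℂ) :
    ∫ y, f y ∂(empiricalMeasure s hs x : Measure X) = 𝔼 i ∈ s, f (x i) := by
  rw [empiricalMeasure, ProbabilityMeasure.coe_mk, integral_smul_measure,
    integral_finsetSum_measure fun i _ => integrable_dirac enorm_lt_top]
  simp [integral_dirac, expect_eq_sum_div_card, div_eq_inv_mul]

end Empirical

section WeakConvergence

variable {X 𝕜 : Type*} [TopologicalSpace X] [CompactSpace X] [MeasurableSpace X]
  [OpensMeasurableSpace X] [RCLike 𝕜]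

lemma ContinuousMap.integrable_of_compactSpace (μ : Measure X) [IsFiniteMeasure μ]
    (f : C(X, 𝕜)) : Integrable f μ :=
  (BoundedContinuousFunction.mkOfCompact f).integrable μ

lemma ContinuousMap.lipschitzWith_integral (μ : Measure X) [IsProbabilityMeasure μ] :
    LipschitzWith 1 fun f : C(X, 𝕜) => ∫ x, f x ∂μ :=
  LipschitzWith.of_dist_le_mul fun f g => by
    rw [dist_eq_norm, ← integral_sub (f.integrable_of_compactSpace μ)
      (g.integrable_of_compactSpace μ), NNReal.coe_one, one_mul, dist_eq_norm]
    simpa using norm_integral_le_of_norm_le_const (ae_of_all μ fun x => (f - g).norm_coe_le_norm x)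

theorem ProbabilityMeasure.tendsto_of_forall_integral_tendsto_of_dense_span {ι : Type*}
    {l : Filter ι} {μs : ι → ProbabilityMeasure X} {μ : ProbabilityMeasure X}
    {S : Set C(X, 𝕜)} (hS : (Submodule.span 𝕜 S).topologicalClosure = ⊤)
    (h : ∀ f ∈ S, Tendsto (fun i => ∫ x, f x ∂(μs i : Measure X)) l
      (𝓝 (∫ x, f x ∂(μ : Measure X)))) :
    Tendsto μs l (𝓝 μ) := by
  let V : Submodule 𝕜 C(X, 𝕜) :=
    { carrier := {f | Tendsto (fun i => ∫ x, f x ∂(μs i : Measure X)) l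
        (𝓝 (∫ x, f x ∂(μ : Measure X)))}
      add_mem' := fun {f g} hf hg => by
        simpa [integral_add (f.integrable_of_compactSpace _) (g.integrable_of_compactSpace _)]
          using hf.add hg
      zero_mem' := by simpa using tendsto_const_nhds
      smul_mem' := fun c f hf => by simpa [integral_const_mul] using hf.const_smul c }
  have hV : IsClosed (V : Set C(X, 𝕜)) :=
    (LipschitzWith.uniformEquicontinuous _ 1 fun i =>
      ContinuousMap.lipschitzWith_integral _).equicontinuous.isClosed_setOfPred_tendsto
      (ContinuousMap.lipschitzWith_integral _).continuous
  have hVtop : V = ⊤ := by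
    rw [eq_top_iff, ← hS]
    exact Submodule.topologicalClosure_minimal _ (Submodule.span_le.mpr h) hV
  rw [ProbabilityMeasure.tendsto_iff_forall_integral_rclike_tendsto 𝕜]
  exact fun f => (hVtop ▸ Submodule.mem_top : f.toContinuousMap ∈ V)

end WeakConvergence

instance inst_s15 : IsProbabilityMeasure (volume : Measure UnitAddCircle) :=
  ⟨by simp [AddCircle.measure_univ]⟩

namespace UnitAddTorus

variable {d : Type*} [Fintype d]

def mFourierAddChar (n : d → ℤ) : AddChar (UnitAddTorus d) ℂ where
  toFun := mFourier n
  map_zero_eq_one' := by simp [mFourier]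
  map_add_eq_mul' x y := by
    simp only [mFourier, ContinuousMap.coe_mk, Pi.add_apply, fourier_apply, smul_add,
      AddCircle.toCircle_add, Circle.coe_mul, prod_mul_distrib]

@[simp]
lemma mFourierAddChar_apply (n : d → ℤ) (x : UnitAddTorus d) :
    mFourierAddChar n x = mFourier n x :=
  rfl

lemma mFourier_injective : Function.Injective (mFourier (d := d)) := fun n n' h =>
  orthonormal_mFourier.linearIndependent.injective (by simp only [mFourierLp, h])

lemma mFourierAddChar_ne_one {n : d → ℤ} (hn : n ≠ 0) : mFourierAddChar n ≠ 1 := by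
  intro h
  refine hn (mFourier_injective ?_)
  rw [mFourier_zero]
  ext x
  exact congrArg (· x) h

theorem tendsto_empiricalMeasure_volume {G : Type*} [AddCommGroup G] {τ : G →+ UnitAddTorus d}
    (hτ : DenseRange τ) {F : ℕ → Finset G} (hF : IsFolnerSeq F) :
    Tendsto (fun k => empiricalMeasure (F k) (hF.1 k) τ) atTop
      (𝓝 (⟨volume, inferInstance⟩ : ProbabilityMeasure (UnitAddTorus d))) := by
  refine ProbabilityMeasure.tendsto_of_forall_integral_tendsto_of_dense_span
    span_mFourier_closure_eq_top ?_
  rintro _ ⟨n, rfl⟩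
  simp only [ProbabilityMeasure.coe_mk, integral_empiricalMeasure]
  rcases eq_or_ne n 0 with rfl | hn
  · simp [mFourier_zero, expect_const (hF.1 _)]
  · have hψ := AddChar.compAddMonoidHom_ne_one_of_denseRange (mFourierAddChar_ne_one hn)
      (map_continuous (mFourier n)) hτ
    have hbound (x : G) : ‖(mFourierAddChar n).compAddMonoidHom τ x‖ ≤ 1 :=
      ((mFourier n).norm_coe_le_norm (τ x)).trans_eq mFourier_norm
    have hint := AddChar.integral_eq_zero_of_ne_one (μ := volume) (mFourierAddChar_ne_one hn)
    simp only [mFourierAddChar_apply] at hint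
    simpa [hint] using hF.tendsto_expect_addChar_zero hψ hbound

end UnitAddTorus

theorem folner_equidistribution_jordan_general (G : Type*) [AddCommGroup G]
    (m : ℕ) (τ : G →+ (Fin m → AddCircle (1 : ℝ))) (hτ : DenseRange τ)
    (F : ℕ → Finset G) (hF : IsFolnerSeq F)
    (A : Set (Fin m → AddCircle (1 : ℝ))) (hA : volume (frontier A) = 0) :
    Tendsto (fun k => (((F k : Set G) ∩ τ ⁻¹' A).ncard : ℝ) / (F k).card) atTop
      (𝓝 (volume A).toReal) := by
  have hA' := ProbabilityMeasure.tendsto_measure_of_null_frontier_of_tendsto'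
    (UnitAddTorus.tendsto_empiricalMeasure_volume hτ hF) hA
  refine ((ENNReal.tendsto_toReal (measure_ne_top volume A)).comp hA').congr fun k => ?_
  simp [empiricalMeasure_apply, ENNReal.toReal_div]

/-- **Equidistribution along Følner sets.** If `τ : G → 𝕋ⁿ` has dense image, then for any
Følner sequence `(F_k)` and any Jordan measurable set `A ⊆ 𝕋ⁿ`, the proportion of `g ∈ F_k`
with `τ(g) ∈ A` tends to the Haar measure of `A`. -/
theorem folner_equidistribution_jordan (G : Type*) [AddCommGroup G] [Countable G]
    (m : ℕ) (hm : 1 ≤ m) (τ : G →+ (Fin m → AddCircle (1 : ℝ))) (hτ : DenseRange τ)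
    (F : ℕ → Finset G) (hF : IsFolnerSeq F)
    (A : Set (Fin m → AddCircle (1 : ℝ))) (hA : volume (frontier A) = 0) :
    Tendsto (fun k => (((F k : Set G) ∩ τ ⁻¹' A).ncard : ℝ) / (F k).card) atTop
      (𝓝 (volume A).toReal) :=
  folner_equidistribution_jordan_general G m τ hτ F hF A hA

end
end
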